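/- For a colour s of a Set-valued symmetric coloured operad S, the corepresentable algebra s̲(-), defined on a colour c by the disjoint union over n ≥ 0 of the quotients S(s,...,s;c)/Σ_n (with n copies of s), satisfies the operadic Yoneda lemma: for any S-algebra F in Sets, the set of natural transformations from s̲(-) to F is in bijection with F(s), the bijection being given by evaluation at id_s. -/

import Mathlib

/-!
Let `u` be the class of `id_s`. The class of `e ∈ S(s,…,s; c)` equals `e · (u,…,u)`, since
composing `e` with units gives `e` back; so a natural transformation is determined by its value
at `u`. Conversely, for `a ∈ F(s)` the assignment `e ↦ e · (a,…,a)` is constant on `Σₙ`-orbits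
because a constant family is fixed by permutations, and it is natural because operations act on
`s̲(-)` by composition and the action on `F` is compatible with composition.
-/

universe u

/-- A symmetric coloured operad in `Set` (presented with a list-indexed set of
operations, full operadic composition, units and symmetric group actions). -/
structure Operad : Type (u + 1) where
  /-- The colours of the operad. -/
  Color : Type u
  /-- The set of operations with a given (ordered) list of input colours and output colour. -/
  Op : List Color → Color → Type u
  /-- The identity (unit) operation at each colour. -/
  unit : ∀ c : Color, Op [c] c
  /-- Full operadic composition: an operation may be composed with a list of operations
  whose outputs match its inputs. -/
  comp : ∀ {cs : List Color} {c : Color}, Op cs c →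
    ∀ gs : List (Σ ds : List Color, Σ x : Color, Op ds x),
      gs.map (fun g => g.2.1) = cs → Op (gs.map (fun g => g.1)).flatten c
  /-- The symmetric group actions, permuting the inputs of an operation. -/
  perm : ∀ {cs : List Color} {c : Color} (σ : Equiv.Perm (Fin cs.length)),
    Op cs c → Op (List.ofFn (fun i => cs.get (σ i))) c
  /-- Right unit law. -/
  comp_unit : ∀ {cs : List Color} {c : Color} (f : Op cs c)
      (h : (cs.map fun d => (⟨[d], d, unit d⟩ : Σ ds : List Color, Σ x : Color, Op ds x)).map
        (fun g => g.2.1) = cs),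
    HEq (comp f _ h) f
  /-- Left unit law. -/
  unit_comp : ∀ {ds : List Color} {x : Color} (g : Op ds x)
      (h : [(⟨ds, x, g⟩ : Σ ds : List Color, Σ x : Color, Op ds x)].map (fun g => g.2.1) = [x]),
    HEq (comp (unit x) _ h) g
  /-- The identity permutation acts trivially. -/
  perm_refl : ∀ {cs : List Color} {c : Color} (f : Op cs c), HEq (perm (Equiv.refl _) f) f
  /-- Associativity of operadic composition. -/
  assoc : ∀ {cs : List Color} {c : Color} (f : Op cs c)
      (gs : List (Σ ds : List Color, Σ x : Color, Op ds x))
      (hg : gs.map (fun g => g.2.1) = cs)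
      (hss : List (List (Σ ds : List Color, Σ x : Color, Op ds x)))
      (hlen : hss.length = gs.length)
      (hmatch : ∀ (i : ℕ) (hi : i < gs.length) (hi' : i < hss.length),
        (hss[i]).map (fun g => g.2.1) = (gs[i]).1)
      (hflat : hss.flatten.map (fun g => g.2.1) = (gs.map (fun g => g.1)).flatten)
      (gs' : List (Σ ds : List Color, Σ x : Color, Op ds x))
      (hlen' : gs'.length = gs.length)
      (hrel : ∀ (i : ℕ) (hi : i < gs.length) (hi' : i < hss.length) (hi'' : i < gs'.length),
        gs'[i] = ⟨((hss[i]).map (fun g => g.1)).flatten, (gs[i]).2.1,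
          comp (gs[i]).2.2 (hss[i]) (hmatch i hi hi')⟩)
      (h2 : gs'.map (fun g => g.2.1) = cs),
    HEq (comp (comp f gs hg) hss.flatten hflat) (comp f gs' h2)

/-- A morphism of symmetric coloured operads. -/
structure OperadHom (X S : Operad.{u}) : Type u where
  /-- The underlying map on colours. -/
  onColor : X.Color → S.Color
  /-- The underlying map on operations. -/
  onOp : ∀ {cs : List X.Color} {c : X.Color}, X.Op cs c → S.Op (cs.map onColor) (onColor c)
  /-- Compatibility with units. -/
  onOp_unit : ∀ c, onOp (X.unit c) = S.unit (onColor c)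
  /-- Compatibility with operadic composition. -/
  onOp_comp : ∀ {cs : List X.Color} {c : X.Color} (f : X.Op cs c)
      (gs : List (Σ ds : List X.Color, Σ x : X.Color, X.Op ds x))
      (hg : gs.map (fun g => g.2.1) = cs)
      (hg' : (gs.map (fun g =>
          (⟨g.1.map onColor, onColor g.2.1, onOp g.2.2⟩ : Σ ds : List S.Color, Σ x : S.Color, S.Op ds x))).map
          (fun g => g.2.1) = cs.map onColor),
    HEq (onOp (X.comp f gs hg)) (S.comp (onOp f) _ hg')
  /-- Compatibility with the symmetric group actions. -/
  onOp_perm : ∀ {cs : List X.Color} {c : X.Color} (σ : Equiv.Perm (Fin cs.length)) (f : X.Op cs c)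
      (σ' : Equiv.Perm (Fin (cs.map onColor).length))
      (hσ : ∀ (i : ℕ) (h : i < cs.length) (h' : i < (cs.map onColor).length),
        (σ' ⟨i, h'⟩ : ℕ) = (σ ⟨i, h⟩ : ℕ)),
    HEq (onOp (X.perm σ f)) (S.perm σ' (onOp f))

theorem List.flatten_map_singleton' {α : Type u} (l : List α) :
    (l.map fun a => [a]).flatten = l := by
  induction l with
  | nil => rfl
  | cons a t ih => simpa using ih

/-- Partial ("∘ᵢ") composition: plug an operation `ξ : (x₁,…,xₙ) → x` into the
input of colour `x` sitting between the inputs `as` and `bs` of `τ`. -/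
def Operad.precomp (X : Operad.{u}) {as bs xs : List X.Color} {x z : X.Color}
    (τ : X.Op (as ++ x :: bs) z) (ξ : X.Op xs x) : X.Op (as ++ xs ++ bs) z :=
  cast (congrArg (fun l => X.Op l z) (by
    simp [List.flatten_map_singleton', Function.comp_def]))
    (X.comp τ ((as.map fun d => ⟨[d], d, X.unit d⟩) ++
        ⟨xs, x, ξ⟩ :: (bs.map fun d => ⟨[d], d, X.unit d⟩))
      (by simp [Function.comp_def]))

/-- An operation `ξ` of `X` is `p`-coCartesian if every operation of `X` whose inputs
contain the inputs of `ξ` (in any position), together with a factorization of its image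
through `p(ξ)` in `S`, factors uniquely through `ξ` compatibly with the given
factorization. -/
def OperadHom.IsCoCartesian {X S : Operad.{u}} (p : OperadHom X S) {xs : List X.Color}
    {x : X.Color} (ξ : X.Op xs x) : Prop :=
  ∀ (as bs : List X.Color) (z : X.Color) (χ : X.Op (as ++ xs ++ bs) z)
    (σ : S.Op (as.map p.onColor ++ p.onColor x :: bs.map p.onColor) (p.onColor z)),
    HEq (p.onOp χ) (S.precomp σ (p.onOp ξ)) →
    ∃! ζ : X.Op (as ++ x :: bs) z,
      HEq (p.onOp ζ) σ ∧ X.precomp ζ ξ = χ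

/-- `p : X ⟶ S` exhibits `X` as opfibered over `S` if every operation of `S` with
prescribed lifts of its inputs admits a `p`-coCartesian lift with those inputs. -/
def OperadHom.IsOpfibered {X S : Operad.{u}} (p : OperadHom X S) : Prop :=
  ∀ {ss : List S.Color} {s : S.Color} (σ : S.Op ss s) (xs : List X.Color),
    xs.map p.onColor = ss →
    ∃ (x : X.Color) (ξ : X.Op xs x),
      p.onColor x = s ∧ HEq (p.onOp ξ) σ ∧ p.IsCoCartesian ξ

/-- A unary operation of an operad is an isomorphism if it admits a two-sided
inverse unary operation. -/
def Operad.IsIso (X : Operad.{u}) {x y : X.Color} (ξ : X.Op [x] y) : Prop :=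
  ∃ inv : X.Op [y] x,
    X.precomp (as := []) (bs := []) ξ inv = X.unit y ∧
    X.precomp (as := []) (bs := []) inv ξ = X.unit x

/-- An algebra over a `Set`-valued operad `S` with values in `Sets`, i.e. a morphism of
operads `S → Sets̲`.  The action is presented on lists of elements of the total space
lying over the input colours. -/
structure OperadAlgebra (S : Operad.{u}) : Type (u + 1) where
  /-- The underlying family of sets. -/
  carrier : S.Color → Type u
  /-- The action of operations. -/
  act : ∀ {cs : List S.Color} {c : S.Color}, S.Op cs c →
    ∀ xs : List (Σ c : S.Color, carrier c), xs.map Sigma.fst = cs → carrier c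
  /-- Units act trivially. -/
  act_unit : ∀ (c : S.Color) (a : carrier c)
      (h : [(⟨c, a⟩ : Σ c : S.Color, carrier c)].map Sigma.fst = [c]),
    act (S.unit c) [⟨c, a⟩] h = a
  /-- The action is compatible with operadic composition. -/
  act_comp : ∀ {cs : List S.Color} {c : S.Color} (f : S.Op cs c)
      (gs : List (Σ ds : List S.Color, Σ x : S.Color, S.Op ds x))
      (hg : gs.map (fun g => g.2.1) = cs)
      (xss : List (List (Σ c : S.Color, carrier c))) (hlen : xss.length = gs.length)
      (hmatch : ∀ (i : ℕ) (hi : i < gs.length) (hi' : i < xss.length),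
        (xss[i]).map Sigma.fst = (gs[i]).1)
      (hflat : xss.flatten.map Sigma.fst = (gs.map (fun g => g.1)).flatten)
      (ys : List (Σ c : S.Color, carrier c)) (hylen : ys.length = gs.length)
      (hy : ∀ (i : ℕ) (hi : i < gs.length) (hi' : i < xss.length) (hi'' : i < ys.length),
        ys[i] = ⟨(gs[i]).2.1, act (gs[i]).2.2 (xss[i]) (hmatch i hi hi')⟩)
      (hys : ys.map Sigma.fst = cs),
    act (S.comp f gs hg) xss.flatten hflat = act f ys hys
  /-- The action is compatible with the symmetric group actions. -/
  act_perm : ∀ {cs : List S.Color} {c : S.Color} (σ : Equiv.Perm (Fin cs.length))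
      (f : S.Op cs c) (xs ys : List (Σ c : S.Color, carrier c))
      (hx : xs.map Sigma.fst = List.ofFn (fun i => cs.get (σ i)))
      (hy : ys.map Sigma.fst = cs)
      (hxy : ∀ i : Fin cs.length, xs[(i : ℕ)]? = ys[((σ i : Fin cs.length) : ℕ)]?),
    act (S.perm σ f) xs hx = act f ys hy

/-- A natural transformation (morphism) of `S`-algebras in `Sets`. -/
structure OperadAlgHom {S : Operad.{u}} (F G : OperadAlgebra S) : Type u where
  /-- The components of the transformation. -/
  app : ∀ c, F.carrier c → G.carrier c
  /-- Naturality with respect to the action of operations. -/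
  naturality : ∀ {cs : List S.Color} {c : S.Color} (f : S.Op cs c)
      (xs : List (Σ c : S.Color, F.carrier c)) (h : xs.map Sigma.fst = cs)
      (h' : (xs.map fun q => (⟨q.1, app q.1 q.2⟩ : Σ c : S.Color, G.carrier c)).map
        Sigma.fst = cs),
    app c (F.act f xs h) = G.act f _ h'

theorem List.flatten_map_replicate {α : Type*} (l : List ℕ) (x : α) :
    (l.map fun k => List.replicate k x).flatten = List.replicate l.sum x := by
  induction l with
  | nil => rfl
  | cons k t ih =>
    simp only [List.map_cons, List.flatten_cons, ih, List.sum_cons, List.replicate_add]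

open Function

namespace Operad

variable (S : Operad.{u}) (s : S.Color)

def compReplicate {cs : List S.Color} {c : S.Color} (f : S.Op cs c)
    (gs : List (Σ d : S.Color, Σ n : ℕ, S.Op (List.replicate n s) d))
    (hg : gs.map Sigma.fst = cs) :
    S.Op (List.replicate (gs.map fun g => g.2.1).sum s) c :=
  cast (congrArg (fun l => S.Op l c) (by
      rw [List.map_map, ← List.flatten_map_replicate, List.map_map]; rfl))
    (S.comp f (gs.map fun g => ⟨List.replicate g.2.1 s, g.1, g.2.2⟩)
      (by rw [List.map_map]; exact hg))

variable {S s}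

theorem compReplicate_heq {cs : List S.Color} {c : S.Color} (f : S.Op cs c)
    (gs : List (Σ d : S.Color, Σ n : ℕ, S.Op (List.replicate n s) d))
    (hg : gs.map Sigma.fst = cs)
    (hg' : (gs.map fun g => (⟨List.replicate g.2.1 s, g.1, g.2.2⟩ :
      Σ ds : List S.Color, Σ x : S.Color, S.Op ds x)).map (fun g => g.2.1) = cs) :
    HEq (S.compReplicate s f gs hg) (S.comp f _ hg') :=
  cast_heq _ _

theorem compReplicate_unit {n : ℕ} {c : S.Color} (e : S.Op (List.replicate n s) c) :
    HEq (S.compReplicate s e (List.replicate n ⟨s, 1, S.unit s⟩) (by simp)) e := by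
  refine (compReplicate_heq _ _ _ (by simp)).trans ?_
  have units : (List.replicate n (⟨s, 1, S.unit s⟩ :
        Σ d : S.Color, Σ n : ℕ, S.Op (List.replicate n s) d)).map
        (fun g => (⟨List.replicate g.2.1 s, g.1, g.2.2⟩ :
          Σ ds : List S.Color, Σ x : S.Color, S.Op ds x))
      = (List.replicate n s).map fun d => ⟨[d], d, S.unit d⟩ := by
    simp [List.map_replicate]
  generalize_proofs hg
  revert hg
  rw [units]
  exact S.comp_unit e

end Operad

namespace OperadAlgebra

variable {S : Operad.{u}} (F : OperadAlgebra S) {s : S.Color}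

theorem act_congr {cs cs' : List S.Color} {c : S.Color}
    {f : S.Op cs c} {f' : S.Op cs' c} (hf : HEq f f')
    {xs xs' : List (Σ c : S.Color, F.carrier c)} (hxs : xs = xs')
    (h : xs.map Sigma.fst = cs) (h' : xs'.map Sigma.fst = cs') :
    F.act f xs h = F.act f' xs' h' := by
  subst hxs
  obtain rfl : cs = cs' := h.symm.trans h'
  cases hf
  rfl

theorem sigma_act_congr {A A' : Σ ds : List S.Color, Σ x : S.Color, S.Op ds x} (hA : A = A')
    {xs xs' : List (Σ c : S.Color, F.carrier c)} (hxs : xs = xs')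
    (h : xs.map Sigma.fst = A.1) (h' : xs'.map Sigma.fst = A'.1) :
    (⟨A.2.1, F.act A.2.2 xs h⟩ : Σ c : S.Color, F.carrier c)
      = ⟨A'.2.1, F.act A'.2.2 xs' h'⟩ := by
  subst hA hxs
  rfl

def actConst (a : F.carrier s) {c : S.Color} (x : Σ n : ℕ, S.Op (List.replicate n s) c) :
    F.carrier c :=
  F.act x.2 (List.replicate x.1 ⟨s, a⟩) (by simp)

theorem actConst_unit (a : F.carrier s) : F.actConst a ⟨1, S.unit s⟩ = a :=
  F.act_unit s a _

theorem actConst_eq_of_perm (a : F.carrier s) {c : S.Color}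
    {x y : Σ n : ℕ, S.Op (List.replicate n s) c} (hn : x.1 = y.1)
    (σ : Equiv.Perm (Fin (List.replicate x.1 s).length)) (hσ : HEq (S.perm σ x.2) y.2) :
    F.actConst a x = F.actConst a y := by
  obtain ⟨n, e⟩ := x
  obtain ⟨m, e'⟩ := y
  obtain rfl : n = m := hn
  have hx : (List.replicate n (⟨s, a⟩ : Σ c : S.Color, F.carrier c)).map Sigma.fst
      = List.ofFn (fun i => (List.replicate n s).get (σ i)) := by
    simp [List.getElem_replicate]
  have fixed := F.act_perm σ e _ (List.replicate n ⟨s, a⟩) hx (by simp) (fun i => by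
    have hi : (i : ℕ) < n := by simpa using i.isLt
    have hσi : ((σ i : Fin (List.replicate n s).length) : ℕ) < n := by simpa using (σ i).isLt
    simp [hi, hσi])
  exact fixed.symm.trans (F.act_congr hσ rfl hx _)

theorem actConst_compReplicate (a : F.carrier s) {cs : List S.Color} {c : S.Color}
    (f : S.Op cs c) (gs : List (Σ d : S.Color, Σ n : ℕ, S.Op (List.replicate n s) d))
    (hg : gs.map Sigma.fst = cs)
    (h : (gs.map fun g => (⟨g.1, F.actConst a g.2⟩ : Σ c : S.Color, F.carrier c)).map
      Sigma.fst = cs) :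
    F.actConst a ⟨_, S.compReplicate s f gs hg⟩
      = F.act f (gs.map fun g => ⟨g.1, F.actConst a g.2⟩) h := by
  let xss := gs.map fun g => List.replicate g.2.1 (⟨s, a⟩ : Σ c : S.Color, F.carrier c)
  have hflat : xss.flatten = List.replicate (gs.map fun g => g.2.1).sum ⟨s, a⟩ := by
    simp only [xss, ← List.flatten_map_replicate, List.map_map, comp_def]
  have hg' : (gs.map fun g => (⟨List.replicate g.2.1 s, g.1, g.2.2⟩ :
      Σ ds : List S.Color, Σ x : S.Color, S.Op ds x)).map (fun g => g.2.1) = cs := by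
    rw [List.map_map]; exact hg
  refine (F.act_congr (Operad.compReplicate_heq f gs hg hg') hflat.symm _ ?_).trans
    (F.act_comp f _ hg' xss (by simp [xss]) (fun i _ _ => by simp [xss]) _ _ (by simp)
      (fun i hi _ _ => by
        have hi' : i < gs.length := by simpa using hi
        rw [List.getElem_map]
        exact F.sigma_act_congr (A := ⟨List.replicate gs[i].2.1 s, gs[i].1, gs[i].2.2⟩)
          (by simp) (by simp [xss]) _ _) h)
  rw [hflat, ← List.flatten_map_replicate, List.map_map, List.map_map]
  simp [comp_def, List.map_replicate]

end OperadAlgebra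

namespace OperadAlgHom

variable {S : Operad.{u}} {F G : OperadAlgebra S}

@[ext]
theorem ext {η η' : OperadAlgHom F G} (h : η.app = η'.app) : η = η' := by
  cases η; cases η'; cases h; rfl

theorem app_actConst (η : OperadAlgHom F G) {s c : S.Color} (a : F.carrier s)
    (x : Σ n : ℕ, S.Op (List.replicate n s) c) :
    η.app c (F.actConst a x) = G.actConst (η.app s a) x := by
  unfold OperadAlgebra.actConst
  rw [η.naturality _ _ _ (by simp)]
  exact G.act_congr HEq.rfl (by simp [List.map_replicate]) _ _

end OperadAlgHom

namespace OperadAlgebra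

variable {S : Operad.{u}} {s : S.Color} (Rep : OperadAlgebra S)

def ActsByComposition (q : ∀ c, (Σ n : ℕ, S.Op (List.replicate n s) c) → Rep.carrier c) :
    Prop :=
  ∀ {cs : List S.Color} {c : S.Color} (f : S.Op cs c)
    (gs : List (Σ d : S.Color, Σ n : ℕ, S.Op (List.replicate n s) d))
    (hg : gs.map Sigma.fst = cs)
    (h : (gs.map fun g => (⟨g.1, q g.1 g.2⟩ : Σ c : S.Color, Rep.carrier c)).map
      Sigma.fst = cs),
    Rep.act f _ h = q c ⟨_, S.compReplicate s f gs hg⟩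

variable {Rep} {q : ∀ c, (Σ n : ℕ, S.Op (List.replicate n s) c) → Rep.carrier c}

theorem actsByComposition_of_act_eq (hact : ∀ {cs : List S.Color} {c : S.Color} (f : S.Op cs c)
      (gs : List (Σ d : S.Color, Σ n : ℕ, S.Op (List.replicate n s) d))
      (_ : gs.map Sigma.fst = cs)
      (hg' : (gs.map fun g => (⟨List.replicate g.2.1 s, g.1, g.2.2⟩ :
          Σ ds : List S.Color, Σ x : S.Color, S.Op ds x)).map (fun g => g.2.1) = cs)
      (N : ℕ) (_ : N = (gs.map fun g => g.2.1).sum)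
      (e : S.Op (List.replicate N s) c)
      (_ : HEq e (S.comp f (gs.map fun g => ⟨List.replicate g.2.1 s, g.1, g.2.2⟩) hg'))
      (h : (gs.map fun g => (⟨g.1, q g.1 ⟨g.2.1, g.2.2⟩⟩ :
          Σ c : S.Color, Rep.carrier c)).map Sigma.fst = cs),
      Rep.act f _ h = q c ⟨N, e⟩) :
    Rep.ActsByComposition q := fun f gs hg h =>
  hact f gs hg (by rw [List.map_map]; exact hg) _ rfl _ (Operad.compReplicate_heq f gs hg _) h

theorem ActsByComposition.actConst_unit_eq (hact : Rep.ActsByComposition q) {c : S.Color}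
    (x : Σ n : ℕ, S.Op (List.replicate n s) c) :
    Rep.actConst (q s ⟨1, S.unit s⟩) x = q c x := by
  obtain ⟨n, e⟩ := x
  have units : (List.replicate n (⟨s, 1, S.unit s⟩ :
        Σ d : S.Color, Σ n : ℕ, S.Op (List.replicate n s) d)).map
        (fun g => (⟨g.1, q g.1 g.2⟩ : Σ c : S.Color, Rep.carrier c))
      = List.replicate n ⟨s, q s ⟨1, S.unit s⟩⟩ := by
    simp [List.map_replicate]
  calc Rep.actConst (q s ⟨1, S.unit s⟩) ⟨n, e⟩
      = Rep.act e _ (by simp) := Rep.act_congr HEq.rfl units.symm _ _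
    _ = q c ⟨_, S.compReplicate s e (List.replicate n ⟨s, 1, S.unit s⟩) (by simp)⟩ :=
      hact _ _ _ _
    _ = q c ⟨n, e⟩ := congrArg (q c) (Sigma.ext (by simp) (Operad.compReplicate_unit e))

end OperadAlgebra

def FibresWithinOrbits {S : Operad.{u}} {s : S.Color} {R : S.Color → Type u}
    (q : ∀ c, (Σ n : ℕ, S.Op (List.replicate n s) c) → R c) : Prop :=
  ∀ c (x y : Σ n : ℕ, S.Op (List.replicate n s) c), q c x = q c y →
    ∃ (_ : x.1 = y.1) (σ : Equiv.Perm (Fin (List.replicate x.1 s).length)),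
      HEq (S.perm σ x.2) y.2

namespace OperadAlgHom

variable {S : Operad.{u}} {s : S.Color} {Rep F : OperadAlgebra S}
  {q : ∀ c, (Σ n : ℕ, S.Op (List.replicate n s) c) → Rep.carrier c}

theorem ext_of_app_unit (hsurj : ∀ c, Surjective (q c)) (hact : Rep.ActsByComposition q)
    {η η' : OperadAlgHom Rep F}
    (h : η.app s (q s ⟨1, S.unit s⟩) = η'.app s (q s ⟨1, S.unit s⟩)) : η = η' := by
  ext c r
  obtain ⟨x, rfl⟩ := hsurj c r
  rw [← hact.actConst_unit_eq x, η.app_actConst, η'.app_actConst, h]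

theorem actConst_surjInv (hsurj : ∀ c, Surjective (q c))
    (hker : FibresWithinOrbits q)
    (a : F.carrier s) {c : S.Color} (x : Σ n : ℕ, S.Op (List.replicate n s) c) :
    F.actConst a (surjInv (hsurj c) (q c x)) = F.actConst a x := by
  obtain ⟨hn, σ, hσ⟩ := hker c _ _ (surjInv_eq (hsurj c) (q c x))
  exact F.actConst_eq_of_perm a hn σ hσ

noncomputable def yoneda (hsurj : ∀ c, Surjective (q c))
    (hker : FibresWithinOrbits q)
    (hact : Rep.ActsByComposition q) (a : F.carrier s) : OperadAlgHom Rep F where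
  app c r := F.actConst a (surjInv (hsurj c) r)
  naturality := by
    intro cs c f xs h h'
    let gs := xs.map fun p => (⟨p.1, surjInv (hsurj p.1) p.2⟩ :
      Σ d : S.Color, Σ n : ℕ, S.Op (List.replicate n s) d)
    have hg : gs.map Sigma.fst = cs := by simpa [gs, comp_def] using h
    have lift : gs.map (fun g => (⟨g.1, q g.1 g.2⟩ : Σ c : S.Color, Rep.carrier c)) = xs := by
      simp [gs, comp_def, surjInv_eq]
    have hrep : Rep.act f xs h = q c ⟨_, S.compReplicate s f gs hg⟩ :=
      (Rep.act_congr HEq.rfl lift.symm h (by rwa [lift])).trans (hact f gs hg _)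
    rw [hrep, actConst_surjInv hsurj hker, F.actConst_compReplicate a f gs hg (by simpa [gs])]
    exact F.act_congr HEq.rfl (by simp [gs]) _ _

theorem yoneda_app_unit (hsurj : ∀ c, Surjective (q c))
    (hker : FibresWithinOrbits q)
    (hact : Rep.ActsByComposition q) (a : F.carrier s) :
    (yoneda hsurj hker hact a).app s (q s ⟨1, S.unit s⟩) = a := by
  simp only [yoneda, actConst_surjInv hsurj hker, F.actConst_unit]

end OperadAlgHom

/-- **operadic Yoneda lemma.** Let `s` be a colour of a `Set`-valued
operad `S` and let `Rep` be (any realization of) the corepresentable algebra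
`s̲(-) : c ↦ ⨿_{n ≥ 0} S(s,…,s; c)/Σₙ`: this is encoded by surjections
`q c : (Σ n, S.Op (replicate n s) c) → Rep.carrier c` whose fibres are exactly the
`Σₙ`-orbits, compatibly with the algebra structure.  Then for every `S`-algebra `F`
in `Sets`, evaluation at (the class of) `id_s` is a bijection from the set of
natural transformations `s̲(-) → F` to `F(s)`. -/
theorem statement0 (S : Operad.{u}) (s : S.Color) (F : OperadAlgebra S)
    (Rep : OperadAlgebra S)
    (q : ∀ c, (Σ n : ℕ, S.Op (List.replicate n s) c) → Rep.carrier c)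
    (hsurj : ∀ c, Function.Surjective (q c))
    (hker : ∀ c (a b : Σ n : ℕ, S.Op (List.replicate n s) c), q c a = q c b ↔
      ∃ (_ : a.1 = b.1) (σ : Equiv.Perm (Fin (List.replicate a.1 s).length)),
        HEq (S.perm σ a.2) b.2)
    (hact : ∀ {cs : List S.Color} {c : S.Color} (f : S.Op cs c)
      (gs : List (Σ d : S.Color, Σ n : ℕ, S.Op (List.replicate n s) d))
      (hg : gs.map Sigma.fst = cs)
      (hg' : (gs.map fun g => (⟨List.replicate g.2.1 s, g.1, g.2.2⟩ :
          Σ ds : List S.Color, Σ x : S.Color, S.Op ds x)).map (fun g => g.2.1) = cs)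
      (N : ℕ) (hN : N = (gs.map fun g => g.2.1).sum)
      (e : S.Op (List.replicate N s) c)
      (he : HEq e (S.comp f (gs.map fun g => ⟨List.replicate g.2.1 s, g.1, g.2.2⟩) hg'))
      (h : (gs.map fun g => (⟨g.1, q g.1 ⟨g.2.1, g.2.2⟩⟩ :
          Σ c : S.Color, Rep.carrier c)).map Sigma.fst = cs),
      Rep.act f _ h = q c ⟨N, e⟩) :
    Function.Bijective (fun η : OperadAlgHom Rep F => η.app s (q s ⟨1, S.unit s⟩)) := by
  have hcomp : Rep.ActsByComposition q := OperadAlgebra.actsByComposition_of_act_eq hact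
  have hfib : FibresWithinOrbits q := fun c x y => (hker c x y).mp
  exact ⟨fun η η' h => OperadAlgHom.ext_of_app_unit hsurj hcomp h,
    fun a => ⟨OperadAlgHom.yoneda hsurj hfib hcomp a,
      OperadAlgHom.yoneda_app_unit hsurj hfib hcomp a⟩⟩
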